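/- Let L : ℤ² → ℝ be a kernel supported in {0,…,M−1}², h₀,…,h_{K−1} ∈ ℝ, and let f : ℤ² → ℝ be a bounded function. Let B ∈ ℕ⁺ and let ⊓'_{B,K,M} denote the window operator onto the square {−(K−1)M, …, B−1+(K−1)M}². Then ‖ ⊓_B( Σ_{k=0}^{K−1} h_k (L⊗)^k f − Σ_{k=0}^{K−1} h_k (L⊗)^k (⊓_B f) ) ‖ ≤ H_K · ‖ ⊓'_{B,K,M}( f − ⊓_B f ) ‖, where H_K = Σ_{k=0}^{K−1} |h_k| ‖L‖₁^k. -/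

import Mathlib

open MeasureTheory

/-- 2D convolution of a kernel `L` with a signal `u` on `ℤ²`:
`(L ⊗ u)(n) = ∑_k L(k) u(n - k)`. -/
noncomputable def conv2 (L u : ℤ × ℤ → ℝ) : ℤ × ℤ → ℝ :=
  fun n => ∑' k : ℤ × ℤ, L k * u (n - k)

/-- `k`-fold iterated 2D convolution `(L ⊗)^k u`. -/
noncomputable def convIter (L : ℤ × ℤ → ℝ) : ℕ → (ℤ × ℤ → ℝ) → (ℤ × ℤ → ℝ)
  | 0 => fun u => u
  | k + 1 => fun u => conv2 L (convIter L k u)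

/-- The 2D convolutional filter `h_D(L, u) = ∑_{k=0}^{K-1} h_k (L ⊗)^k u`. -/
noncomputable def filt (L : ℤ × ℤ → ℝ) (h : ℕ → ℝ) (K : ℕ) (u : ℤ × ℤ → ℝ) : ℤ × ℤ → ℝ :=
  fun n => ∑ k ∈ Finset.range K, h k * convIter L k u n

/-- `ℓ¹` norm `‖L‖₁` of a kernel. -/
noncomputable def kernelL1 (L : ℤ × ℤ → ℝ) : ℝ := ∑' k : ℤ × ℤ, |L k|

/-- Squared `ℓ²(ℤ²)` norm. -/
noncomputable def l2normSq (u : ℤ × ℤ → ℝ) : ℝ := ∑' v : ℤ × ℤ, u v ^ 2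

/-- `ℓ²(ℤ²)` norm. -/
noncomputable def l2norm (u : ℤ × ℤ → ℝ) : ℝ := Real.sqrt (l2normSq u)

/-- Window operator `⊓_B`: restriction to the square `{0, …, B-1}²`. -/
def window (B : ℕ) (u : ℤ × ℤ → ℝ) : ℤ × ℤ → ℝ :=
  fun n => if 0 ≤ n.1 ∧ n.1 < (B : ℤ) ∧ 0 ≤ n.2 ∧ n.2 < (B : ℤ) then u n else 0

/-- Window operator `⊓'_{B,K,M}`: restriction to the square
`{-(K-1)M, …, B-1+(K-1)M}²`. -/
def window' (B K M : ℕ) (u : ℤ × ℤ → ℝ) : ℤ × ℤ → ℝ :=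
  fun n => if -(((K - 1) * M : ℕ) : ℤ) ≤ n.1 ∧ n.1 ≤ (B : ℤ) - 1 + ((K - 1) * M : ℕ)
      ∧ -(((K - 1) * M : ℕ) : ℤ) ≤ n.2 ∧ n.2 ≤ (B : ℤ) - 1 + ((K - 1) * M : ℕ)
    then u n else 0

/-! Filtering is linear, so the difference of the two outputs is the filter applied to
`g = f - ⊓_B f`. A kernel supported in `[0, M]²` makes `(L⊗)^k u` on a box depend only on `u`
on the box pushed down by `k • (M, M)`; hence on the window `⊓_B` one may replace `g` by its
finitely supported restriction `⊓' g`. Restriction does not increase the `ℓ²` norm, and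
`L ⊗ u` is a finite combination of translates of `u`, so the triangle inequality gives Young's
bound `‖L ⊗ u‖ ≤ ‖L‖₁ ‖u‖`, and iterating it gives `H_K ‖⊓' g‖`. -/

open Function Set
open scoped ENNReal

-- `l2norm` is a `tsum`, so it takes the junk value `0` off `ℓ²`: hence the `Memℓp` hypotheses.
lemma l2norm_eq_norm {u : ℤ × ℤ → ℝ} (hu : Memℓp u 2) :
    l2norm u = ‖(⟨u, hu⟩ : lp (fun _ : ℤ × ℤ => ℝ) 2)‖ := by
  rw [lp.norm_eq_tsum_rpow (by norm_num), l2norm, l2normSq, Real.sqrt_eq_rpow]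
  simp [Real.norm_eq_abs, sq_abs]

lemma memℓp_of_finite_support {u : ℤ × ℤ → ℝ} (hu : (support u).Finite) (p : ℝ≥0∞) :
    Memℓp u p :=
  (memℓp_zero hu).of_exponent_ge zero_le

lemma Memℓp.comp_sub_right {u : ℤ × ℤ → ℝ} (hu : Memℓp u 2) (s : ℤ × ℤ) :
    Memℓp (fun n => u (n - s)) 2 := by
  rw [memℓp_gen_iff (by norm_num)] at hu ⊢
  exact (Equiv.subRight s).summable_iff.2 hu

lemma l2norm_comp_sub_right (u : ℤ × ℤ → ℝ) (s : ℤ × ℤ) :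
    l2norm (fun n => u (n - s)) = l2norm u := by
  rw [l2norm, l2norm, l2normSq, l2normSq]
  exact congrArg Real.sqrt ((Equiv.subRight s).tsum_eq fun n => u n ^ 2)

lemma l2norm_smul (c : ℝ) (u : ℤ × ℤ → ℝ) : l2norm (c • u) = |c| * l2norm u := by
  simp only [l2norm, l2normSq, Pi.smul_apply, smul_eq_mul, mul_pow, tsum_mul_left]
  rw [Real.sqrt_mul (sq_nonneg c), Real.sqrt_sq_eq_abs]

lemma l2norm_add_le {u v : ℤ × ℤ → ℝ} (hu : Memℓp u 2) (hv : Memℓp v 2) :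
    l2norm (u + v) ≤ l2norm u + l2norm v := by
  rw [l2norm_eq_norm hu, l2norm_eq_norm hv, l2norm_eq_norm (hu.add hv)]
  exact norm_add_le (⟨u, hu⟩ : lp (fun _ : ℤ × ℤ => ℝ) 2) ⟨v, hv⟩

lemma l2norm_sum_smul_le {ι : Type*} (s : Finset ι) (c : ι → ℝ) {u : ι → ℤ × ℤ → ℝ}
    (hu : ∀ i ∈ s, Memℓp (u i) 2) :
    l2norm (∑ i ∈ s, c i • u i) ≤ ∑ i ∈ s, |c i| * l2norm (u i) := by
  classical
  induction s using Finset.induction_on with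
  | empty => simp [l2norm, l2normSq]
  | insert a s has ih =>
    rw [Finset.forall_mem_insert] at hu
    have hrest : Memℓp (∑ i ∈ s, c i • u i) 2 := by
      rw [Finset.sum_fn]
      exact .finsetSum _ fun i hi => (hu.2 i hi).const_smul _
    rw [Finset.sum_insert has, Finset.sum_insert has, ← l2norm_smul]
    exact (l2norm_add_le (hu.1.const_smul _) hrest).trans (add_le_add le_rfl (ih hu.2))

lemma l2norm_indicator_le {u : ℤ × ℤ → ℝ} (hu : Memℓp u 2) (A : Set (ℤ × ℤ)) :
    l2norm (A.indicator u) ≤ l2norm u := by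
  have hnorm (n : ℤ × ℤ) : ‖A.indicator u n‖ ≤ ‖u n‖ := norm_indicator_le_norm_self u n
  rw [l2norm_eq_norm hu, l2norm_eq_norm (hu.mono' hnorm)]
  exact lp.norm_mono two_ne_zero hnorm

lemma kernelL1_nonneg (L : ℤ × ℤ → ℝ) : 0 ≤ kernelL1 L := tsum_nonneg fun _ => abs_nonneg _

section Convolution

variable {L : ℤ × ℤ → ℝ}

lemma conv2_eq_sum (hL : (support L).Finite) (u : ℤ × ℤ → ℝ) :
    conv2 L u = ∑ s ∈ hL.toFinset, L s • fun n => u (n - s) := by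
  ext n
  rw [conv2, Finset.sum_apply]
  exact tsum_eq_sum fun s hs => by simp_all

lemma kernelL1_eq_sum (hL : (support L).Finite) : kernelL1 L = ∑ s ∈ hL.toFinset, |L s| :=
  tsum_eq_sum fun s hs => by simp_all

lemma conv2_sub (hL : (support L).Finite) (u v : ℤ × ℤ → ℝ) :
    conv2 L (u - v) = conv2 L u - conv2 L v := by
  rw [conv2_eq_sum hL, conv2_eq_sum hL, conv2_eq_sum hL, ← Finset.sum_sub_distrib]
  refine Finset.sum_congr rfl fun s _ => ?_
  rw [← smul_sub]
  rfl

lemma Memℓp.conv2 (hL : (support L).Finite) {u : ℤ × ℤ → ℝ} (hu : Memℓp u 2) :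
    Memℓp (conv2 L u) 2 := by
  rw [conv2_eq_sum hL, Finset.sum_fn]
  exact .finsetSum _ fun s _ => (hu.comp_sub_right s).const_smul _

lemma l2norm_conv2_le (hL : (support L).Finite) {u : ℤ × ℤ → ℝ} (hu : Memℓp u 2) :
    l2norm (conv2 L u) ≤ kernelL1 L * l2norm u := by
  calc l2norm (conv2 L u)
      ≤ ∑ s ∈ hL.toFinset, |L s| * l2norm fun n => u (n - s) := by
        rw [conv2_eq_sum hL]
        exact l2norm_sum_smul_le _ _ fun s _ => hu.comp_sub_right s
    _ = kernelL1 L * l2norm u := by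
        simp only [l2norm_comp_sub_right, kernelL1_eq_sum hL, Finset.sum_mul]

lemma convIter_sub (hL : (support L).Finite) (k : ℕ) (u v : ℤ × ℤ → ℝ) :
    convIter L k (u - v) = convIter L k u - convIter L k v := by
  induction k with
  | zero => rfl
  | succ k ih => simp only [convIter, ih, conv2_sub hL]

lemma Memℓp.convIter (hL : (support L).Finite) (k : ℕ) {u : ℤ × ℤ → ℝ} (hu : Memℓp u 2) :
    Memℓp (convIter L k u) 2 := by
  induction k with
  | zero => exact hu
  | succ k ih => exact ih.conv2 hL

lemma l2norm_convIter_le (hL : (support L).Finite) (k : ℕ) {u : ℤ × ℤ → ℝ} (hu : Memℓp u 2) :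
    l2norm (convIter L k u) ≤ kernelL1 L ^ k * l2norm u := by
  induction k with
  | zero => simp [convIter]
  | succ k ih =>
    calc l2norm (convIter L (k + 1) u)
        ≤ kernelL1 L * l2norm (convIter L k u) := l2norm_conv2_le hL (hu.convIter hL k)
      _ ≤ kernelL1 L * (kernelL1 L ^ k * l2norm u) := by gcongr; exact kernelL1_nonneg L
      _ = kernelL1 L ^ (k + 1) * l2norm u := by ring

lemma conv2_eqOn_Icc {m a b : ℤ × ℤ} (hL : support L ⊆ Icc 0 m) {u v : ℤ × ℤ → ℝ}
    (huv : EqOn u v (Icc (a - m) b)) : EqOn (conv2 L u) (conv2 L v) (Icc a b) := by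
  intro n hn
  refine tsum_congr fun s => ?_
  by_cases hs : L s = 0
  · simp [hs]
  · have hs := hL hs
    rw [huv ⟨sub_le_sub hn.1 hs.2, (sub_le_self _ hs.1).trans hn.2⟩]

lemma convIter_eqOn_Icc {m : ℤ × ℤ} (hL : support L ⊆ Icc 0 m) (k : ℕ) {a b : ℤ × ℤ}
    {u v : ℤ × ℤ → ℝ} (huv : EqOn u v (Icc (a - k • m) b)) :
    EqOn (convIter L k u) (convIter L k v) (Icc a b) := by
  induction k generalizing a with
  | zero => simpa [convIter] using huv
  | succ k ih =>
    refine conv2_eqOn_Icc hL (ih ?_)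
    rwa [sub_sub, ← succ_nsmul']

end Convolution

section Filter

variable {L : ℤ × ℤ → ℝ} (h : ℕ → ℝ) (K : ℕ)

lemma filt_eq_sum (u : ℤ × ℤ → ℝ) :
    filt L h K u = ∑ k ∈ Finset.range K, h k • convIter L k u := by
  ext n
  simp [filt, Finset.sum_apply]

lemma filt_sub (hL : (support L).Finite) (u v : ℤ × ℤ → ℝ) :
    filt L h K (u - v) = filt L h K u - filt L h K v := by
  simp only [filt_eq_sum, convIter_sub hL, smul_sub, Finset.sum_sub_distrib]

lemma Memℓp.filt (hL : (support L).Finite) {u : ℤ × ℤ → ℝ} (hu : Memℓp u 2) :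
    Memℓp (filt L h K u) 2 := by
  rw [filt_eq_sum, Finset.sum_fn]
  exact .finsetSum _ fun k _ => (hu.convIter hL k).const_smul _

lemma l2norm_filt_le (hL : (support L).Finite) {u : ℤ × ℤ → ℝ} (hu : Memℓp u 2) :
    l2norm (filt L h K u) ≤ (∑ k ∈ Finset.range K, |h k| * kernelL1 L ^ k) * l2norm u := by
  calc l2norm (filt L h K u)
      ≤ ∑ k ∈ Finset.range K, |h k| * l2norm (convIter L k u) := by
        rw [filt_eq_sum]
        exact l2norm_sum_smul_le _ _ fun k _ => hu.convIter hL k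
    _ ≤ ∑ k ∈ Finset.range K, |h k| * (kernelL1 L ^ k * l2norm u) := by
        gcongr with k
        exact l2norm_convIter_le hL k hu
    _ = (∑ k ∈ Finset.range K, |h k| * kernelL1 L ^ k) * l2norm u := by
        rw [Finset.sum_mul]
        simp only [mul_assoc]

lemma filt_eqOn_Icc {m : ℤ × ℤ} (hL : support L ⊆ Icc 0 m) (hm : 0 ≤ m) {a b : ℤ × ℤ}
    {u v : ℤ × ℤ → ℝ} (huv : EqOn u v (Icc (a - (K - 1) • m) b)) :
    EqOn (filt L h K u) (filt L h K v) (Icc a b) := by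
  intro n hn
  refine Finset.sum_congr rfl fun k hk => ?_
  have hkK : k ≤ K - 1 := by have := Finset.mem_range.1 hk; omega
  have hsub : Icc (a - k • m) b ⊆ Icc (a - (K - 1) • m) b :=
    Icc_subset_Icc (sub_le_sub_left (nsmul_le_nsmul_left hm hkK) a) le_rfl
  rw [convIter_eqOn_Icc hL k (huv.mono hsub) hn]

end Filter

lemma window_eq_indicator (B : ℕ) (u : ℤ × ℤ → ℝ) :
    window B u = (Icc 0 ((B : ℤ) - 1, (B : ℤ) - 1)).indicator u := by
  ext n
  simp only [window, indicator, mem_Icc, Prod.le_def]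
  congr 1
  apply propext
  simp only [Prod.fst_zero, Prod.snd_zero]
  omega

lemma window'_eq_indicator (B K M : ℕ) (u : ℤ × ℤ → ℝ) :
    window' B K M u = (Icc (-((K - 1) • ((M : ℤ), (M : ℤ))))
      (((B : ℤ) - 1, (B : ℤ) - 1) + (K - 1) • ((M : ℤ), (M : ℤ)))).indicator u := by
  ext n
  simp only [window', indicator, mem_Icc, Prod.le_def]
  congr 1
  apply propext
  simp only [Prod.smul_mk, Prod.neg_mk, Prod.mk_add_mk]
  simp only [nsmul_eq_mul]
  push_cast
  omega

theorem window_truncation_bound_general (L : ℤ × ℤ → ℝ) (M : ℕ)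
    (hL : ∀ k : ℤ × ℤ, L k ≠ 0 → 0 ≤ k.1 ∧ k.1 < (M : ℤ) ∧ 0 ≤ k.2 ∧ k.2 < (M : ℤ))
    (K : ℕ) (h : ℕ → ℝ) (f : ℤ × ℤ → ℝ)
    (B : ℕ) :
    l2norm (window B (fun n => filt L h K f n - filt L h K (window B f) n))
      ≤ (∑ k ∈ Finset.range K, |h k| * kernelL1 L ^ k)
        * l2norm (window' B K M (fun n => f n - window B f n)) := by
  -- The closed box `[0, M]²` rather than `[0, M - 1]²` keeps `0 ≤ m` also when `M = 0`.
  set m : ℤ × ℤ := ((M : ℤ), (M : ℤ))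
  have hm : 0 ≤ m := ⟨Nat.cast_nonneg M, Nat.cast_nonneg M⟩
  have hLm : support L ⊆ Icc 0 m := fun s hs => by
    obtain ⟨h1, h2, h3, h4⟩ := hL s hs
    exact ⟨⟨h1, h3⟩, ⟨h2.le, h4.le⟩⟩
  have hLfin : (support L).Finite := (finite_Icc 0 m).subset hLm
  set g := f - window B f
  set g' := window' B K M g with hg'_def
  have hg' : Memℓp g' 2 := by
    rw [hg'_def, window'_eq_indicator]
    exact memℓp_of_finite_support ((finite_Icc _ _).subset support_indicator_subset) 2
  have hloc : window B (filt L h K g) = window B (filt L h K g') := by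
    rw [window_eq_indicator, window_eq_indicator]
    refine indicator_congr (filt_eqOn_Icc h K hLm hm fun n hn => ?_)
    have hwide : Icc (0 - (K - 1) • m) ((B : ℤ) - 1, (B : ℤ) - 1) ⊆
        Icc (-((K - 1) • m)) (((B : ℤ) - 1, (B : ℤ) - 1) + (K - 1) • m) :=
      Icc_subset_Icc (zero_sub _).ge (le_add_of_nonneg_right (nsmul_nonneg hm _))
    rw [hg'_def, window'_eq_indicator, indicator_of_mem (hwide hn)]
  calc l2norm (window B (filt L h K f - filt L h K (window B f)))
      = l2norm (window B (filt L h K g')) := by rw [← filt_sub h K hLfin, hloc]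
    _ ≤ l2norm (filt L h K g') := by
        rw [window_eq_indicator]
        exact l2norm_indicator_le (hg'.filt h K hLfin) _
    _ ≤ _ := l2norm_filt_le h K hLfin hg'

/-- **Windowing bound (used in the proof of Theorem 1).**
For a kernel supported in `{0, …, M-1}²` and a bounded signal `f`,
`‖⊓_B (h_D(L, f) - h_D(L, ⊓_B f))‖ ≤ H_K ‖⊓'_{B,K,M} (f - ⊓_B f)‖`, where
`H_K = ∑_{k=0}^{K-1} |h_k| ‖L‖₁ᵏ`. -/
theorem window_truncation_bound (L : ℤ × ℤ → ℝ) (M : ℕ)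
    (hL : ∀ k : ℤ × ℤ, L k ≠ 0 → 0 ≤ k.1 ∧ k.1 < (M : ℤ) ∧ 0 ≤ k.2 ∧ k.2 < (M : ℤ))
    (K : ℕ) (h : ℕ → ℝ) (f : ℤ × ℤ → ℝ) (hf : ∃ Cb : ℝ, ∀ n, |f n| ≤ Cb)
    (B : ℕ) (hB : 0 < B) :
    l2norm (window B (fun n => filt L h K f n - filt L h K (window B f) n))
      ≤ (∑ k ∈ Finset.range K, |h k| * kernelL1 L ^ k)
        * l2norm (window' B K M (fun n => f n - window B f n)) :=
  window_truncation_bound_general L M hL K h f B
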